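/- arXiv:1905.03268 — 4 statements merged into one kernel-verified Lean document; each statement's English description precedes it below -/
import Mathlib

section
/- Two Majorana dimer states that share a dimer but with opposite parity are orthogonal: if 1 ≤ j,k ≤ 2L with j ≠ k, p ∈ {−1,+1}, and ψ, φ ∈ H_L satisfy (γ_j + i p γ_k)ψ = 0 and (γ_j − i p γ_k)φ = 0, then ⟨φ, ψ⟩ = 0. -/
open Complex Matrix

noncomputable section

/-- Computational basis labels for `L` qubits: bit strings `b : Fin L → Fin 2`. -/
abbrev QBasis (L : ℕ) := Fin L → Fin 2

/-- State vectors of `L` qubits (the Hilbert space `H_L = (ℂ²)^{⊗L}`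
in its computational basis coordinates). -/
abbrev QVec (L : ℕ) := QBasis L → ℂ

/-- Operators on `L` qubits, written as matrices in the computational basis. -/
abbrev QOp (L : ℕ) := Matrix (QBasis L) (QBasis L) ℂ

/-- The inner product `⟨φ, ψ⟩`, conjugate-linear in the first argument. -/
def qInner {L : ℕ} (φ ψ : QVec L) : ℂ := ∑ b, (starRingEnd ℂ) (φ b) * ψ b

/-- `+1` for bit `0`, `-1` for bit `1`. -/
def bitSign (x : Fin 2) : ℂ := if x = 0 then 1 else -1

/-- Flip the `k`-th bit of a bit string. -/
def flipBit {L : ℕ} (k : Fin L) (b : QBasis L) : QBasis L :=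
  Function.update b k (1 - b k)

/-- Pauli `X` on the (1-based) site `k`; the identity if `k` is out of range. -/
def siteX (L : ℕ) (k : ℕ) : QOp L :=
  if h : 1 ≤ k ∧ k ≤ L then
    Matrix.of fun b c => if c = flipBit ⟨k - 1, by omega⟩ b then 1 else 0
  else 1

/-- Pauli `Y` on the (1-based) site `k`; the identity if `k` is out of range. -/
def siteY (L : ℕ) (k : ℕ) : QOp L :=
  if h : 1 ≤ k ∧ k ≤ L then
    Matrix.of fun b c =>
      if c = flipBit ⟨k - 1, by omega⟩ b then -Complex.I * bitSign (b ⟨k - 1, by omega⟩)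
      else 0
  else 1

/-- Pauli `Z` on the (1-based) site `k`; the identity if `k` is out of range. -/
def siteZ (L : ℕ) (k : ℕ) : QOp L :=
  if h : 1 ≤ k ∧ k ≤ L then
    Matrix.diagonal fun b => bitSign (b ⟨k - 1, by omega⟩)
  else 1

/-- The ordered operator product `f 1 * f 2 * ⋯ * f n`. -/
def opProd (L : ℕ) (f : ℕ → QOp L) (n : ℕ) : QOp L :=
  ((List.range n).map fun i => f (i + 1)).prod

/-- The Jordan–Wigner Majorana operator `γ_m` (1-based, `1 ≤ m ≤ 2L`):
`γ_{2k-1} = Z_1 ⋯ Z_{k-1} X_k` and `γ_{2k} = Z_1 ⋯ Z_{k-1} Y_k`. -/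
def majorana (L : ℕ) (m : ℕ) : QOp L :=
  opProd L (siteZ L) ((m + 1) / 2 - 1) *
    (if m % 2 = 1 then siteX L ((m + 1) / 2) else siteY L ((m + 1) / 2))

/-- The total parity operator `P = Z_1 Z_2 ⋯ Z_L`. -/
def totalParity (L : ℕ) : QOp L := opProd L (siteZ L) L


lemma bitSign_sq (x : Fin 2) : bitSign x * bitSign x = 1 := by
  fin_cases x <;> simp [bitSign]

lemma star_bitSign (x : Fin 2) : star (bitSign x) = bitSign x := by
  fin_cases x <;> simp [bitSign]

lemma bitSign_sub (x : Fin 2) : bitSign (1 - x) = -bitSign x := by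
  fin_cases x <;> norm_num [bitSign]

lemma flipBit_flipBit {L : ℕ} (k : Fin L) (b : QBasis L) :
    flipBit k (flipBit k b) = b := by
  have h2 : ∀ x : Fin 2, 1 - (1 - x) = x := by decide
  funext i
  rcases eq_or_ne i k with rfl | h
  · simp [flipBit, h2]
  · simp [flipBit, Function.update_of_ne h]

lemma flipBit_eq_iff {L : ℕ} (k : Fin L) (b c : QBasis L) :
    c = flipBit k b ↔ b = flipBit k c := by
  constructor <;> (rintro rfl; rw [flipBit_flipBit])

lemma flipBit_apply_self {L : ℕ} (k : Fin L) (b : QBasis L) :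
    flipBit k b k = 1 - b k := Function.update_self _ _ _

lemma flipBit_apply_ne {L : ℕ} {k i : Fin L} (h : i ≠ k) (b : QBasis L) :
    flipBit k b i = b i := Function.update_of_ne h _ _

lemma flip_mul_flip {L : ℕ} (s : Fin L) (w v : QBasis L → ℂ) :
    ((Matrix.of fun b c => if c = flipBit s b then w b else 0) *
      (Matrix.of fun b c => if c = flipBit s b then v b else 0) : QOp L)
    = Matrix.of (fun b c => if b = c then w b * v (flipBit s b) else 0) := by
  ext b c
  rw [Matrix.mul_apply, Finset.sum_eq_single (flipBit s b)]
  · simp only [Matrix.of_apply, if_pos rfl, flipBit_flipBit]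
    rcases eq_or_ne b c with rfl | hne
    · simp
    · simp [hne, Ne.symm hne]
  · intro d _ hd
    simp [Matrix.of_apply, hd]
  · simp

lemma siteZ_mul_self {L : ℕ} (a : ℕ) : siteZ L a * siteZ L a = 1 := by
  unfold siteZ
  split_ifs with h
  · rw [Matrix.diagonal_mul_diagonal]; simp [bitSign_sq]
  · simp

lemma siteZ_herm {L : ℕ} (a : ℕ) : (siteZ L a)ᴴ = siteZ L a := by
  unfold siteZ
  split_ifs with h
  · rw [Matrix.diagonal_conjTranspose]; simp [star_bitSign]
  · simp

lemma siteX_mul_self {L : ℕ} (s : ℕ) : siteX L s * siteX L s = 1 := by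
  unfold siteX
  split_ifs with h
  · rw [flip_mul_flip]
    ext b c
    simp [Matrix.one_apply]
  · simp

lemma siteY_mul_self {L : ℕ} (s : ℕ) : siteY L s * siteY L s = 1 := by
  unfold siteY
  split_ifs with h
  · rw [flip_mul_flip]
    ext b c
    simp only [Matrix.of_apply, Matrix.one_apply]
    rcases eq_or_ne b c with rfl | hne
    · rw [if_pos rfl, if_pos rfl, flipBit_apply_self, bitSign_sub]
      have h1 := bitSign_sq (b ⟨s - 1, by omega⟩)
      have h2 := Complex.I_sq
      linear_combination (-Complex.I ^ 2) * h1 - h2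
    · rw [if_neg hne, if_neg hne]
  · simp

lemma siteX_herm {L : ℕ} (s : ℕ) : (siteX L s)ᴴ = siteX L s := by
  unfold siteX
  split_ifs with h
  · ext b c
    simp only [Matrix.conjTranspose_apply, Matrix.of_apply]
    by_cases hc : c = flipBit ⟨s - 1, by omega⟩ b
    · rw [if_pos hc, if_pos ((flipBit_eq_iff _ _ _).mp hc)]; simp
    · rw [if_neg hc, if_neg (fun h' => hc ((flipBit_eq_iff _ _ _).mpr h'))]; simp
  · simp

lemma siteY_herm {L : ℕ} (s : ℕ) : (siteY L s)ᴴ = siteY L s := by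
  unfold siteY
  split_ifs with h
  · ext b c
    simp only [Matrix.conjTranspose_apply, Matrix.of_apply]
    by_cases hc : c = flipBit ⟨s - 1, by omega⟩ b
    · rw [if_pos hc, if_pos ((flipBit_eq_iff _ _ _).mp hc)]
      rw [hc, flipBit_apply_self, bitSign_sub]
      simp only [star_mul', star_neg, Complex.star_def, Complex.conj_I, star_bitSign]
      ring
    · rw [if_neg hc, if_neg (fun h' => hc ((flipBit_eq_iff _ _ _).mpr h'))]; simp
  · simp

lemma siteZ_comm_siteZ {L : ℕ} (a b : ℕ) :
    siteZ L a * siteZ L b = siteZ L b * siteZ L a := by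
  unfold siteZ
  split_ifs <;> simp [Matrix.diagonal_mul_diagonal, mul_comm]

lemma siteZ_comm_siteX {L : ℕ} (a s : ℕ) (hne : a ≠ s) :
    siteZ L a * siteX L s = siteX L s * siteZ L a := by
  unfold siteZ siteX
  split_ifs with ha hs hs
  · ext b c
    simp only [Matrix.diagonal_mul, Matrix.mul_diagonal, Matrix.of_apply]
    split_ifs with hc
    · subst hc
      rw [flipBit_apply_ne (by simp [Fin.ext_iff]; omega)]
      ring
    · ring
  · simp
  · simp
  · simp

lemma siteZ_comm_siteY {L : ℕ} (a s : ℕ) (hne : a ≠ s) :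
    siteZ L a * siteY L s = siteY L s * siteZ L a := by
  unfold siteZ siteY
  split_ifs with ha hs hs
  · ext b c
    simp only [Matrix.diagonal_mul, Matrix.mul_diagonal, Matrix.of_apply]
    split_ifs with hc
    · subst hc
      rw [flipBit_apply_ne (by simp [Fin.ext_iff]; omega)]
      ring
    · ring
  · simp
  · simp
  · simp

lemma opProd_succ {L : ℕ} (f : ℕ → QOp L) (n : ℕ) :
    opProd L f (n + 1) = opProd L f n * f (n + 1) := by
  unfold opProd
  rw [List.range_succ, List.map_append, List.prod_append]
  simp

lemma opProdZ_comm_Z {L : ℕ} (a n : ℕ) :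
    opProd L (siteZ L) n * siteZ L a = siteZ L a * opProd L (siteZ L) n := by
  induction n with
  | zero => simp [opProd]
  | succ n ih =>
    rw [opProd_succ, mul_assoc, siteZ_comm_siteZ, ← mul_assoc, ih, mul_assoc]

lemma opProdZ_herm {L : ℕ} (n : ℕ) :
    (opProd L (siteZ L) n)ᴴ = opProd L (siteZ L) n := by
  induction n with
  | zero => simp [opProd]
  | succ n ih =>
    rw [opProd_succ, Matrix.conjTranspose_mul, siteZ_herm, ih, opProdZ_comm_Z]

lemma opProdZ_sq {L : ℕ} (n : ℕ) :
    opProd L (siteZ L) n * opProd L (siteZ L) n = 1 := by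
  induction n with
  | zero => simp [opProd]
  | succ n ih =>
    rw [opProd_succ, mul_assoc, ← mul_assoc (siteZ L (n+1)), ← opProdZ_comm_Z,
      mul_assoc, siteZ_mul_self, mul_one, ih]

lemma opProdZ_comm_X {L : ℕ} (s n : ℕ) (h : n < s) :
    opProd L (siteZ L) n * siteX L s = siteX L s * opProd L (siteZ L) n := by
  induction n with
  | zero => simp [opProd]
  | succ n ih =>
    rw [opProd_succ, mul_assoc, siteZ_comm_siteX _ _ (by omega), ← mul_assoc,
      ih (by omega), mul_assoc]

lemma opProdZ_comm_Y {L : ℕ} (s n : ℕ) (h : n < s) :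
    opProd L (siteZ L) n * siteY L s = siteY L s * opProd L (siteZ L) n := by
  induction n with
  | zero => simp [opProd]
  | succ n ih =>
    rw [opProd_succ, mul_assoc, siteZ_comm_siteY _ _ (by omega), ← mul_assoc,
      ih (by omega), mul_assoc]

lemma majorana_herm {L : ℕ} (m : ℕ) (hm : 1 ≤ m) : (majorana L m)ᴴ = majorana L m := by
  unfold majorana
  have hs : (m + 1) / 2 - 1 < (m + 1) / 2 := by omega
  split_ifs with h
  · rw [Matrix.conjTranspose_mul, siteX_herm, opProdZ_herm, opProdZ_comm_X _ _ hs]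
  · rw [Matrix.conjTranspose_mul, siteY_herm, opProdZ_herm, opProdZ_comm_Y _ _ hs]

lemma majorana_sq {L : ℕ} (m : ℕ) (hm : 1 ≤ m) : majorana L m * majorana L m = 1 := by
  unfold majorana
  have hs : (m + 1) / 2 - 1 < (m + 1) / 2 := by omega
  split_ifs with h
  · rw [mul_assoc, ← mul_assoc (siteX L _), ← opProdZ_comm_X _ _ hs,
      mul_assoc, siteX_mul_self, mul_one, opProdZ_sq]
  · rw [mul_assoc, ← mul_assoc (siteY L _), ← opProdZ_comm_Y _ _ hs,
      mul_assoc, siteY_mul_self, mul_one, opProdZ_sq]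


/-- two Majorana dimer states sharing a dimer with opposite parity
are orthogonal. -/
theorem opposite_dimer_parity_orthogonal (L j k : ℕ)
    (hj1 : 1 ≤ j) (hj2 : j ≤ 2 * L) (hk1 : 1 ≤ k) (hk2 : k ≤ 2 * L) (hjk : j ≠ k)
    (p : ℂ) (hp : p = 1 ∨ p = -1) (ψ φ : QVec L)
    (hψ : (majorana L j + (Complex.I * p) • majorana L k) *ᵥ ψ = 0)
    (hφ : (majorana L j - (Complex.I * p) • majorana L k) *ᵥ φ = 0) :
    qInner φ ψ = 0 := by
  have key : ∀ m : ℕ, 1 ≤ m → ∀ v w : QVec L,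
      star (majorana L m *ᵥ v) ⬝ᵥ (majorana L m *ᵥ w) = star v ⬝ᵥ w := by
    intro m hm v w
    rw [Matrix.star_mulVec, majorana_herm m hm, ← Matrix.dotProduct_mulVec,
      Matrix.mulVec_mulVec, majorana_sq m hm, Matrix.one_mulVec]
  have h1 : majorana L j *ᵥ ψ = -((Complex.I * p) • (majorana L k *ᵥ ψ)) := by
    rw [Matrix.add_mulVec, Matrix.smul_mulVec] at hψ
    exact eq_neg_of_add_eq_zero_left hψ
  have h2 : majorana L j *ᵥ φ = (Complex.I * p) • (majorana L k *ᵥ φ) := by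
    rw [Matrix.sub_mulVec, Matrix.smul_mulVec] at hφ
    exact sub_eq_zero.mp hφ
  have hq : qInner φ ψ = star φ ⬝ᵥ ψ := rfl
  have hstar : star (Complex.I * p) * (Complex.I * p) = 1 := by
    rcases hp with rfl | rfl <;> simp [Complex.star_def, Complex.conj_I] <;> ring_nf <;>
      simp [Complex.I_sq]
  have main : star φ ⬝ᵥ ψ = -(star φ ⬝ᵥ ψ) := by
    calc star φ ⬝ᵥ ψ
        = star (majorana L j *ᵥ φ) ⬝ᵥ (majorana L j *ᵥ ψ) := (key j hj1 φ ψ).symm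
      _ = star ((Complex.I * p) • (majorana L k *ᵥ φ)) ⬝ᵥ
            (-((Complex.I * p) • (majorana L k *ᵥ ψ))) := by rw [h1, h2]
      _ = -((star (Complex.I * p) * (Complex.I * p)) •
            (star (majorana L k *ᵥ φ) ⬝ᵥ (majorana L k *ᵥ ψ))) := by
          rw [star_smul, dotProduct_neg, smul_dotProduct,
            dotProduct_smul, smul_smul]
      _ = -(star φ ⬝ᵥ ψ) := by rw [hstar, key k hk1, one_smul]
  rw [hq]
  linear_combination (1 / 2 : ℂ) * main

end
end

section
/- Sign of a matching permutation counts crossings: let M = {(a_1,b_1),…,(a_L,b_L)} be a perfect matching of {1,…,2L} with a_i < b_i for each i, and let σ be the permutation of {1,…,2L} defined by σ(2i−1) = a_i and σ(2i) = b_i. Then the sign of σ equals (−1)^{N_c(M)}, where N_c(M) is the number of crossing pairs of M; in particular this sign does not depend on the ordering chosen for the pairs of M. -/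
/-!
Write `sign σ` as the product, over pairs of positions `p < q`, of `+1` or `-1` according as
`σ p < σ q` or not. Group the positions into the blocks `{2i, 2i+1}` of the pairs. Inside a block
the factor is `+1` because `a_i < b_i`. For two blocks `i < j` the four factors compare
`a_i, b_i` with `a_j, b_j`: nested or disjoint pairs give an even number of inversions, crossing
pairs an odd one. So `sign σ = (-1)^k` with `k` the number of crossing pairs `{i, j}`.
-/

noncomputable section

/-- The number of crossing pairs of a matching `M`: pairs `(a,b)` and `(c,d)` of `M`
(written with `a < b`, `c < d`) cross if `a < c < b < d` or `c < a < d < b`; each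
crossing is counted once (via the ordering `a < c`). -/
def crossings (M : Finset (ℕ × ℕ)) : ℕ :=
  ((M ×ˢ M).filter fun x => x.1.1 < x.2.1 ∧ x.2.1 < x.1.2 ∧ x.1.2 < x.2.2).card

/-- The (0-based) position `2i - 1` (1-based), i.e. the first slot of the `i`-th pair. -/
def posA (L : ℕ) (i : Fin L) : Fin (2 * L) := ⟨2 * (i : ℕ), by have := i.isLt; omega⟩

/-- The (0-based) position `2i` (1-based), i.e. the second slot of the `i`-th pair. -/
def posB (L : ℕ) (i : Fin L) : Fin (2 * L) := ⟨2 * (i : ℕ) + 1, by have := i.isLt; omega⟩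

open Finset Equiv

def PairsCross {α : Type*} [LinearOrder α] (p q : α × α) : Prop :=
  p.1 < q.1 ∧ q.1 < p.2 ∧ p.2 < q.2

instance {α : Type*} [LinearOrder α] (p q : α × α) : Decidable (PairsCross p q) :=
  inferInstanceAs (Decidable (_ ∧ _ ∧ _))

theorem PairsCross.asymm {α : Type*} [LinearOrder α] {p q : α × α} (h : PairsCross p q) :
    ¬ PairsCross q p :=
  fun h' => lt_asymm h.1 h'.1

theorem pairsCross_map_iff {α β : Type*} [LinearOrder α] [LinearOrder β] {g : α → β}
    (hg : StrictMono g) (p q : α × α) :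
    PairsCross (Prod.map g g p) (Prod.map g g q) ↔ PairsCross p q := by
  simp only [PairsCross, Prod.map_fst, Prod.map_snd, hg.lt_iff_lt]

theorem crossings_image_eq_card {ι α : Type*} [Fintype ι] [LinearOrder α] {g : α → ℕ}
    (hg : StrictMono g) {p : ι → α × α} (hp : Function.Injective p) :
    crossings (univ.image fun i => Prod.map g g (p i)) =
      #{x : ι × ι | PairsCross (p x.1) (p x.2)} := by
  classical
  have hf : Function.Injective fun i => Prod.map g g (p i) :=
    (hg.injective.prodMap hg.injective).comp hp
  rw [crossings, ← prodMap_image_product, filter_image, card_image_of_injective _ (hf.prodMap hf),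
    univ_product_univ]
  exact congrArg card (filter_congr fun x _ => pairsCross_map_iff hg (p x.1) (p x.2))

theorem card_lt_and_or_swap_eq_card {α : Type*} [Fintype α] [LinearOrder α]
    (r : α → α → Prop) [DecidableRel r] (hr : ∀ i j, r i j → ¬ r j i) :
    #{x : α × α | x.1 < x.2 ∧ (r x.1 x.2 ∨ r x.2 x.1)} = #{x : α × α | r x.1 x.2} := by
  refine card_nbij' (fun x => if r x.1 x.2 then x else x.swap)
    (fun x => if x.1 < x.2 then x else x.swap) ?_ ?_ ?_ ?_ <;>
  · rintro ⟨i, j⟩ h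
    simp only [coe_filter, mem_univ, true_and, Set.mem_ofPred_eq] at h ⊢
    grind

theorem prod_prod_ite_neg_one_eq_pow {ι : Type*} [Fintype ι] (P : ι → ι → Prop)
    [DecidableRel P] :
    ∏ i, ∏ j, (if P i j then -1 else 1 : ℤˣ) = (-1) ^ #{x : ι × ι | P x.1 x.2} := by
  rw [← Fintype.prod_prod_type', ← prod_filter, prod_const]

def ltSign {α : Type*} [LinearOrder α] (u v : α) : ℤˣ := if u < v then 1 else -1

theorem ltSign_of_lt {α : Type*} [LinearOrder α] {u v : α} (h : u < v) : ltSign u v = 1 :=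
  if_pos h

theorem ltSign_mul_four_eq {α : Type*} [LinearOrder α] {a b c d : α} (hab : a < b) (hcd : c < d)
    (hac : a ≠ c) (hbc : b ≠ c) (hbd : b ≠ d) :
    ltSign a c * ltSign a d * ltSign b c * ltSign b d =
      if PairsCross (a, b) (c, d) ∨ PairsCross (c, d) (a, b) then -1 else 1 := by
  simp only [ltSign, PairsCross]
  split_ifs <;> simp only [mul_one, mul_neg, neg_neg] <;> grind

theorem Equiv.Perm.sign_eq_prod_ltSign {ι : Type*} [Fintype ι] {n : ℕ} (e : ι ≃ Fin n)
    (σ : Perm (Fin n)) :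
    Perm.sign σ = ∏ x, ∏ y, if e x < e y then ltSign (σ (e x)) (σ (e y)) else 1 := by
  rw [σ.sign_eq_prod_prod_Ioi, ← e.prod_comp]
  refine Fintype.prod_congr _ _ fun x => ?_
  rw [← filter_lt_eq_Ioi, prod_filter, ← e.prod_comp]
  rfl

def pairPos (L : ℕ) : Fin L × Fin 2 ≃ Fin (2 * L) :=
  finProdFinEquiv.trans (finCongr (Nat.mul_comm L 2))

theorem pairPos_lt_pairPos_iff {L : ℕ} (x y : Fin L × Fin 2) :
    pairPos L x < pairPos L y ↔ x.1 < y.1 ∨ x.1 = y.1 ∧ x.2 < y.2 := by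
  obtain ⟨⟨i, hi⟩, ⟨t, ht⟩⟩ := x
  obtain ⟨⟨j, hj⟩, ⟨u, hu⟩⟩ := y
  simp only [pairPos, finProdFinEquiv, trans_apply, coe_fn_mk, finCongr_apply, Fin.cast_mk,
    Fin.lt_def, Fin.mk.injEq]
  omega

@[simp] theorem pairPos_zero {L : ℕ} (i : Fin L) : pairPos L (i, 0) = posA L i := by
  ext; simp [pairPos, posA, finProdFinEquiv]

@[simp] theorem pairPos_one {L : ℕ} (i : Fin L) : pairPos L (i, 1) = posB L i := by
  ext
  simp only [pairPos, finProdFinEquiv, trans_apply, coe_fn_mk, finCongr_apply, Fin.cast_mk, posB]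
  omega

section Matching

variable {L : ℕ} (σ : Perm (Fin (2 * L)))

def pairImage (i : Fin L) : Fin (2 * L) × Fin (2 * L) := (σ (posA L i), σ (posB L i))

theorem pairImage_injective : Function.Injective (pairImage σ) := fun i j h => by
  have := congrArg (fun p => (p.1 : ℕ)) h
  simp only [pairImage, posA, Fin.val_inj, EmbeddingLike.apply_eq_iff_eq, Fin.mk.injEq] at this
  omega

def blockSign (i j : Fin L) : ℤˣ :=
  ∏ t, ∏ u, if pairPos L (i, t) < pairPos L (j, u) then
    ltSign (σ (pairPos L (i, t))) (σ (pairPos L (j, u))) else 1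

theorem sign_eq_prod_prod_blockSign : Perm.sign σ = ∏ i, ∏ j, blockSign σ i j := by
  rw [σ.sign_eq_prod_ltSign (pairPos L)]
  simp only [Fintype.prod_prod_type]
  exact Fintype.prod_congr _ _ fun i => prod_comm

variable {σ}

theorem blockSign_eq (hσ : ∀ i : Fin L, σ (posA L i) < σ (posB L i)) (i j : Fin L) :
    blockSign σ i j = if i < j ∧ (PairsCross (pairImage σ i) (pairImage σ j) ∨
      PairsCross (pairImage σ j) (pairImage σ i)) then -1 else 1 := by
  simp only [blockSign, Fin.prod_univ_two, pairPos_lt_pairPos_iff, pairPos_zero, pairPos_one]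
  rcases lt_trichotomy i j with hij | rfl | hji
  · simp only [hij, true_or, if_true, true_and, ← mul_assoc]
    refine ltSign_mul_four_eq (hσ i) (hσ j) ?_ ?_ ?_ <;>
      simp only [ne_eq, EmbeddingLike.apply_eq_iff_eq, posA, posB, Fin.ext_iff, Fin.lt_def] at * <;>
      omega
  · simp [ltSign_of_lt (hσ i)]
  · simp [not_lt_of_gt hji, hji.ne']

theorem sign_eq_neg_one_pow_card_pairsCross (hσ : ∀ i : Fin L, σ (posA L i) < σ (posB L i)) :
    Perm.sign σ =
      (-1) ^ #{x : Fin L × Fin L | PairsCross (pairImage σ x.1) (pairImage σ x.2)} := by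
  rw [sign_eq_prod_prod_blockSign]
  simp only [blockSign_eq hσ]
  rw [prod_prod_ite_neg_one_eq_pow, card_lt_and_or_swap_eq_card
    (fun i j => PairsCross (pairImage σ i) (pairImage σ j)) fun _ _ => PairsCross.asymm]

end Matching

/-- if `σ` is the permutation of `{1, …, 2L}` listing the pairs
`(a_i, b_i)` (with `a_i < b_i`) of a perfect matching `M` via `σ(2i−1) = a_i`,
`σ(2i) = b_i`, then `sign σ = (−1)^{N_c(M)}`, where `N_c(M)` is the number of
crossing pairs of `M`.  (Here positions and values are encoded 0-based by `Fin (2L)`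
and converted to 1-based natural numbers for the matching.) -/
theorem sign_matching_perm_eq_crossings (L : ℕ) (σ : Equiv.Perm (Fin (2 * L)))
    (hσ : ∀ i : Fin L, σ (posA L i) < σ (posB L i)) :
    (Equiv.Perm.sign σ : ℤ) = (-1) ^ crossings
      ((Finset.univ : Finset (Fin L)).image fun i =>
        (((σ (posA L i)) : ℕ) + 1, ((σ (posB L i)) : ℕ) + 1)) := by
  have hsucc : StrictMono fun v : Fin (2 * L) => (v : ℕ) + 1 := fun _ _ h => Nat.succ_lt_succ h
  rw [sign_eq_neg_one_pow_card_pairsCross hσ,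
    ← crossings_image_eq_card hsucc (pairImage_injective σ)]
  push_cast
  rfl

end
end

section
/- The five-qubit code space: on H_5, the four stabilizer generators S_k := X_k Z_{k+1} Z_{k+2} X_{k+3} (k = 1,2,3,4, site indices taken modulo 5 with representatives in {1,…,5}) pairwise commute and each squares to the identity; their joint +1 eigenspace C := {ψ : S_k ψ = ψ for k = 1,…,4} is two-dimensional; the total parity operator P commutes with every S_k, maps C to itself, and the restriction of P to C has both eigenvalues +1 and −1, each with a one-dimensional eigenspace. -/
open Complex Matrix

noncomputable section

/-- Site index taken modulo 5 with representatives in `{1, …, 5}`. -/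
def idx5 (m : ℕ) : ℕ := (m - 1) % 5 + 1

/-- The stabilizer generators `S_k = X_k Z_{k+1} Z_{k+2} X_{k+3}` of the `[[5,1,3]]`
code, site indices modulo 5 with representatives in `{1, …, 5}`. -/
def stab5 (k : ℕ) : QOp 5 :=
  siteX 5 (idx5 k) * siteZ 5 (idx5 (k + 1)) * siteZ 5 (idx5 (k + 2)) *
    siteX 5 (idx5 (k + 3))

/-- The code space of the five-qubit code: the joint `+1` eigenspace of
`S_1, S_2, S_3, S_4`. -/
def codeSpace5 : Submodule ℂ (QVec 5) :=
  ⨅ k ∈ Finset.Icc 1 4, LinearMap.ker ((stab5 k).mulVecLin - LinearMap.id)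
-- auxiliary signed-permutation machinery
def sgn (s : Bool) : ℂ := if s then -1 else 1

lemma sgn_mul (x y : Bool) : sgn x * sgn y = sgn (xor x y) := by
  cases x <;> cases y <;> simp [sgn]

def Msp (s : QBasis 5 → Bool) (σ : QBasis 5 → QBasis 5) : QOp 5 :=
  Matrix.of fun b c => if c = σ b then sgn (s b) else 0

lemma Msp_mul (s1 s2 : QBasis 5 → Bool) (σ1 σ2 : QBasis 5 → QBasis 5) :
    Msp s1 σ1 * Msp s2 σ2 =
      Msp (fun b => xor (s1 b) (s2 (σ1 b))) (fun b => σ2 (σ1 b)) := by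
  ext b c
  simp only [Matrix.mul_apply, Msp, Matrix.of_apply, ite_mul, zero_mul]
  rw [Finset.sum_ite_eq' Finset.univ (σ1 b)]
  simp only [Finset.mem_univ, if_true, mul_ite, mul_zero]
  by_cases hc : c = σ2 (σ1 b) <;> simp [hc, sgn_mul]

lemma Msp_one : Msp (fun _ => false) (fun b => b) = 1 := by
  ext b c
  simp only [Msp, Matrix.of_apply, Matrix.one_apply]
  by_cases h : c = b
  · simp [h, sgn]
  · rw [if_neg h, if_neg (Ne.symm h)]

lemma Msp_ext {s s' : QBasis 5 → Bool} {σ σ' : QBasis 5 → QBasis 5}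
    (hs : ∀ b, s b = s' b) (hσ : ∀ b, σ b = σ' b) : Msp s σ = Msp s' σ' := by
  ext b c; simp [Msp, hs b, hσ b]

lemma Msp_mulVec (s : QBasis 5 → Bool) (σ : QBasis 5 → QBasis 5) (ψ : QVec 5) :
    Msp s σ *ᵥ ψ = fun b => sgn (s b) * ψ (σ b) := by
  funext b
  simp only [Matrix.mulVec, dotProduct, Msp, Matrix.of_apply, ite_mul, zero_mul]
  rw [Finset.sum_ite_eq' Finset.univ (σ b)]
  simp

lemma siteX_eq (k : ℕ) (h1 : 1 ≤ k) (h2 : k ≤ 5) :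
    siteX 5 k = Msp (fun _ => false) (flipBit ⟨k - 1, by omega⟩) := by
  rw [siteX, dif_pos ⟨h1, h2⟩]
  ext b c
  simp [Msp, sgn]

lemma siteZ_eq (k : ℕ) (h1 : 1 ≤ k) (h2 : k ≤ 5) :
    siteZ 5 k = Msp (fun b => decide (b ⟨k - 1, by omega⟩ = 1)) (fun b => b) := by
  rw [siteZ, dif_pos ⟨h1, h2⟩]
  ext b c
  simp only [Msp, Matrix.of_apply, Matrix.diagonal, bitSign, Matrix.of_apply, sgn]
  by_cases h : c = b
  · subst h
    rw [if_pos rfl, if_pos rfl]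
    by_cases hx : c ⟨k-1, by omega⟩ = 0
    · simp [hx]
    · have hx1 : c ⟨k-1, by omega⟩ = 1 := by fin_omega
      simp [hx1]
  · rw [if_neg h, if_neg (Ne.symm h)]

-- flip positions (a-1, d-1) and Z positions for the four stabilizers
def σ5 : Fin 4 → QBasis 5 → QBasis 5 := fun k =>
  flipBit (![3,4,0,1] k) ∘ flipBit (![0,1,2,3] k)
def sg5 : Fin 4 → QBasis 5 → Bool := fun k b =>
  decide (b (![1,2,3,4] k) + b (![2,3,4,0] k) = 1)

lemma stab5_eq (k : Fin 4) : stab5 (k.val + 1) = Msp (sg5 k) (σ5 k) := by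
  fin_cases k <;>
  · show stab5 _ = _
    rw [stab5]
    norm_num [idx5]
    rw [siteX_eq _ (by norm_num) (by norm_num), siteZ_eq _ (by norm_num) (by norm_num),
      siteZ_eq _ (by norm_num) (by norm_num), siteX_eq _ (by norm_num) (by norm_num),
      Msp_mul, Msp_mul, Msp_mul]
    exact Msp_ext (by decide) (by decide)

def par (b : QBasis 5) : Bool := decide (b 0 + b 1 + b 2 + b 3 + b 4 = 1)

lemma totalParity_eq : totalParity 5 = Msp par (fun b => b) := by
  rw [totalParity, opProd, show List.range 5 = [0,1,2,3,4] from rfl]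
  simp only [List.map_cons, List.map_nil, List.prod_cons, List.prod_nil, mul_one]
  norm_num
  rw [siteZ_eq 1 (by norm_num) (by norm_num), siteZ_eq 2 (by norm_num) (by norm_num),
    siteZ_eq 3 (by norm_num) (by norm_num), siteZ_eq 4 (by norm_num) (by norm_num),
    siteZ_eq 5 (by norm_num) (by norm_num), Msp_mul, Msp_mul, Msp_mul, Msp_mul]
  exact Msp_ext (by decide) (by decide)

def bidx (b : QBasis 5) : ℕ :=
  (b 0).val + 2 * (b 1).val + 4 * (b 2).val + 8 * (b 3).val + 16 * (b 4).val

def c0 (b : QBasis 5) : ℤ :=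
  [1,0,0,-1,0,1,-1,0,0,1,1,0,-1,0,0,-1,0,-1,1,0,1,0,0,-1,-1,0,0,-1,0,-1,-1,0].getD (bidx b) 0
def c1 (b : QBasis 5) : ℤ :=
  [0,1,1,0,1,0,0,1,1,0,0,-1,0,-1,1,0,1,0,0,1,0,-1,-1,0,0,1,-1,0,1,0,0,-1].getD (bidx b) 0

def bz : QBasis 5 := fun _ => 0
def bo : QBasis 5 := fun i => if i = 0 then 1 else 0

def wrd (b : QBasis 5) : List (Fin 4) :=
  ([[], [], [0, 3], [0, 3], [2], [2], [0, 2, 3], [0, 2, 3], [0], [0], [3], [3],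
    [0, 2], [0, 2], [2, 3], [2, 3], [0, 1, 3], [0, 1, 3], [1], [1], [0, 1, 2, 3],
    [0, 1, 2, 3], [1, 2], [1, 2], [1, 3], [1, 3], [0, 1], [0, 1], [1, 2, 3],
    [1, 2, 3], [0, 1, 2], [0, 1, 2]] : List (List (Fin 4))).getD (bidx b) []

def applyW : List (Fin 4) → QBasis 5 → QBasis 5
  | [], b => b
  | k :: l, b => applyW l (σ5 k b)

def sgnW : List (Fin 4) → QBasis 5 → Bool
  | [], _ => false
  | k :: l, b => xor (sg5 k b) (sgnW l (σ5 k b))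

lemma chase (ψ : QVec 5)
    (H : ∀ k : Fin 4, ∀ b, ψ b = sgn (sg5 k b) * ψ (σ5 k b)) :
    ∀ (l : List (Fin 4)) (b : QBasis 5),
      ψ b = sgn (sgnW l b) * ψ (applyW l b) := by
  intro l
  induction l with
  | nil => intro b; simp [sgnW, applyW, sgn]
  | cons k l ih =>
    intro b
    rw [show sgnW (k :: l) b = xor (sg5 k b) (sgnW l (σ5 k b)) from rfl,
      show applyW (k :: l) b = applyW l (σ5 k b) from rfl,
      H k b, ih (σ5 k b), ← sgn_mul, mul_assoc]

lemma mem_code_iff (ψ : QVec 5) :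
    ψ ∈ codeSpace5 ↔ ∀ k : Fin 4, ∀ b, ψ b = sgn (sg5 k b) * ψ (σ5 k b) := by
  constructor
  · intro h k b
    have hk : (k.val + 1) ∈ Finset.Icc 1 4 := by fin_cases k <;> decide
    have h2 := (Submodule.mem_iInf _).mp ((Submodule.mem_iInf _).mp h (k.val + 1)) hk
    rw [LinearMap.mem_ker, LinearMap.sub_apply, sub_eq_zero, Matrix.mulVecLin_apply,
      LinearMap.id_apply, stab5_eq k, Msp_mulVec] at h2
    exact (congrFun h2 b).symm
  · intro h
    refine (Submodule.mem_iInf _).mpr fun k => (Submodule.mem_iInf _).mpr fun hk => ?_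
    rw [LinearMap.mem_ker, LinearMap.sub_apply, sub_eq_zero, Matrix.mulVecLin_apply,
      LinearMap.id_apply]
    obtain ⟨hk1, hk2⟩ := Finset.mem_Icc.mp hk
    have : ∀ j : Fin 4, Msp (sg5 j) (σ5 j) *ᵥ ψ = ψ := by
      intro j
      rw [Msp_mulVec]
      funext b
      exact (h j b).symm
    interval_cases k
    · exact (stab5_eq 0) ▸ this 0
    · exact (stab5_eq 1) ▸ this 1
    · exact (stab5_eq 2) ▸ this 2
    · exact (stab5_eq 3) ▸ this 3

lemma castSign (s : Bool) : ((if s then (-1 : ℤ) else 1 : ℤ) : ℂ) = sgn s := by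
  cases s <;> simp [sgn]

lemma Dfact : ∀ b : QBasis 5,
    (applyW (wrd b) b = bz ∧ (if sgnW (wrd b) b then (-1:ℤ) else 1) = c0 b ∧ c1 b = 0) ∨
    (applyW (wrd b) b = bo ∧ (if sgnW (wrd b) b then (-1:ℤ) else 1) = c1 b ∧ c0 b = 0) := by
  decide

lemma code_repr {ψ : QVec 5} (hψ : ψ ∈ codeSpace5) (b : QBasis 5) :
    ψ b = (c0 b : ℂ) * ψ bz + (c1 b : ℂ) * ψ bo := by
  have hc := chase ψ ((mem_code_iff ψ).mp hψ) (wrd b) b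
  rcases Dfact b with ⟨h1, h2, h3⟩ | ⟨h1, h2, h3⟩
  · rw [hc, h1, ← h2, h3, castSign]
    push_cast
    ring
  · rw [hc, h1, ← h2, h3, castSign]
    push_cast
    ring

def v0 : QVec 5 := fun b => (c0 b : ℂ)
def v1 : QVec 5 := fun b => (c1 b : ℂ)

lemma c0_inv : ∀ (k : Fin 4) (b : QBasis 5),
    c0 b = (if sg5 k b then (-1:ℤ) else 1) * c0 (σ5 k b) := by decide
lemma c1_inv : ∀ (k : Fin 4) (b : QBasis 5),
    c1 b = (if sg5 k b then (-1:ℤ) else 1) * c1 (σ5 k b) := by decide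
lemma c0_par : ∀ b, (if par b then (-1:ℤ) else 1) * c0 b = c0 b := by decide
lemma c1_par : ∀ b, (if par b then (-1:ℤ) else 1) * c1 b = - c1 b := by decide
lemma par_σ5 : ∀ (k : Fin 4) (b : QBasis 5), par (σ5 k b) = par b := by decide

lemma hv0 : v0 ∈ codeSpace5 := by
  rw [mem_code_iff]; intro k b
  show ((c0 b : ℤ) : ℂ) = sgn (sg5 k b) * ((c0 (σ5 k b) : ℤ) : ℂ)
  rw [c0_inv k b, Int.cast_mul, castSign]

lemma hv1 : v1 ∈ codeSpace5 := by
  rw [mem_code_iff]; intro k b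
  show ((c1 b : ℤ) : ℂ) = sgn (sg5 k b) * ((c1 (σ5 k b) : ℤ) : ℂ)
  rw [c1_inv k b, Int.cast_mul, castSign]

lemma v0z : v0 bz = 1 := by
  show ((c0 bz : ℤ) : ℂ) = 1
  rw [show c0 bz = 1 from by decide]; norm_num
lemma v0o : v0 bo = 0 := by
  show ((c0 bo : ℤ) : ℂ) = 0
  rw [show c0 bo = 0 from by decide]; norm_num
lemma v1z : v1 bz = 0 := by
  show ((c1 bz : ℤ) : ℂ) = 0
  rw [show c1 bz = 0 from by decide]; norm_num
lemma v1o : v1 bo = 1 := by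
  show ((c1 bo : ℤ) : ℂ) = 1
  rw [show c1 bo = 1 from by decide]; norm_num

def Fmap : QVec 5 →ₗ[ℂ] (Fin 2 → ℂ) where
  toFun ψ := ![ψ bz, ψ bo]
  map_add' ψ φ := by funext i; fin_cases i <;> simp
  map_smul' a ψ := by funext i; fin_cases i <;> simp

lemma hbij : Function.Bijective (Fmap.domRestrict codeSpace5) := by
  constructor
  · refine (injective_iff_map_eq_zero _).mpr ?_
    rintro ⟨ψ, hψ⟩ h
    have h0 : ψ bz = 0 := by
      simpa [Fmap, LinearMap.domRestrict_apply] using congrFun h 0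
    have h1 : ψ bo = 0 := by
      simpa [Fmap, LinearMap.domRestrict_apply] using congrFun h 1
    refine Subtype.ext ?_
    funext b
    show ψ b = 0
    rw [code_repr hψ b, h0, h1]
    ring
  · intro f
    refine ⟨⟨f 0 • v0 + f 1 • v1,
      Submodule.add_mem _ (Submodule.smul_mem _ _ hv0) (Submodule.smul_mem _ _ hv1)⟩, ?_⟩
    funext i
    fin_cases i <;>
      simp [Fmap, LinearMap.domRestrict_apply, v0z, v0o, v1z, v1o]

lemma dimC : Module.finrank ℂ codeSpace5 = 2 := by
  rw [(LinearEquiv.ofBijective _ hbij).finrank_eq, Module.finrank_fin_fun]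

lemma mem_kerP_sub (ψ : QVec 5) :
    ψ ∈ LinearMap.ker ((totalParity 5).mulVecLin - LinearMap.id) ↔
      ∀ b, sgn (par b) * ψ b = ψ b := by
  rw [LinearMap.mem_ker, LinearMap.sub_apply, sub_eq_zero, Matrix.mulVecLin_apply,
    LinearMap.id_apply, totalParity_eq, Msp_mulVec]
  constructor
  · intro h b; exact congrFun h b
  · intro h; funext b; exact h b

lemma mem_kerP_add (ψ : QVec 5) :
    ψ ∈ LinearMap.ker ((totalParity 5).mulVecLin + LinearMap.id) ↔
      ∀ b, sgn (par b) * ψ b + ψ b = 0 := by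
  rw [LinearMap.mem_ker, LinearMap.add_apply, Matrix.mulVecLin_apply,
    LinearMap.id_apply, totalParity_eq, Msp_mulVec]
  constructor
  · intro h b; simpa using congrFun h b
  · intro h; funext b; simpa using h b

lemma es1 : stab5 1 = Msp (sg5 0) (σ5 0) := stab5_eq 0
lemma es2 : stab5 2 = Msp (sg5 1) (σ5 1) := stab5_eq 1
lemma es3 : stab5 3 = Msp (sg5 2) (σ5 2) := stab5_eq 2
lemma es4 : stab5 4 = Msp (sg5 3) (σ5 3) := stab5_eq 3

/-- the four stabilizer generators of the five-qubit code pairwise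
commute and square to the identity; their joint `+1` eigenspace is two-dimensional;
the total parity operator `P` commutes with every `S_k`, maps the code space to
itself, and its restriction to the code space has both eigenvalues `+1` and `−1`,
each with a one-dimensional eigenspace. -/
theorem five_qubit_code_space :
    (∀ k ∈ Finset.Icc 1 4, ∀ l ∈ Finset.Icc 1 4, stab5 k * stab5 l = stab5 l * stab5 k) ∧
    (∀ k ∈ Finset.Icc 1 4, stab5 k * stab5 k = 1) ∧
    Module.finrank ℂ codeSpace5 = 2 ∧
    (∀ k ∈ Finset.Icc 1 4, totalParity 5 * stab5 k = stab5 k * totalParity 5) ∧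
    (∀ ψ ∈ codeSpace5, totalParity 5 *ᵥ ψ ∈ codeSpace5) ∧
    Module.finrank ℂ
      ↥(codeSpace5 ⊓ LinearMap.ker ((totalParity 5).mulVecLin - LinearMap.id)) = 1 ∧
    Module.finrank ℂ
      ↥(codeSpace5 ⊓ LinearMap.ker ((totalParity 5).mulVecLin + LinearMap.id)) = 1 := by
  refine ⟨?_, ?_, dimC, ?_, ?_, ?_⟩
  · -- commutation
    intro k hk l hl
    obtain ⟨hk1, hk2⟩ := Finset.mem_Icc.mp hk
    obtain ⟨hl1, hl2⟩ := Finset.mem_Icc.mp hl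
    interval_cases k <;> interval_cases l <;>
      simp only [es1, es2, es3, es4, Msp_mul] <;>
      exact Msp_ext (by decide) (by decide)
  · -- squares
    intro k hk
    obtain ⟨hk1, hk2⟩ := Finset.mem_Icc.mp hk
    interval_cases k <;>
      (simp only [es1, es2, es3, es4, Msp_mul]; rw [← Msp_one];
        exact Msp_ext (by decide) (by decide))
  · -- parity commutes
    intro k hk
    obtain ⟨hk1, hk2⟩ := Finset.mem_Icc.mp hk
    interval_cases k <;>
      (simp only [totalParity_eq, es1, es2, es3, es4, Msp_mul];
        exact Msp_ext (by decide) (by decide))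
  · -- parity preserves code space
    intro ψ hψ
    rw [mem_code_iff] at hψ ⊢
    intro k b
    rw [totalParity_eq, Msp_mulVec]
    show sgn (par b) * ψ b = sgn (sg5 k b) * (sgn (par (σ5 k b)) * ψ (σ5 k b))
    rw [par_σ5 k b, hψ k b]
    ring
  -- eigenspace dimensions
  set A := codeSpace5 ⊓ LinearMap.ker ((totalParity 5).mulVecLin - LinearMap.id) with hAdef
  set B := codeSpace5 ⊓ LinearMap.ker ((totalParity 5).mulVecLin + LinearMap.id) with hBdef
  have hv0A : v0 ∈ A := ⟨hv0, (mem_kerP_sub v0).mpr fun b => by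
    show sgn (par b) * ((c0 b : ℤ) : ℂ) = ((c0 b : ℤ) : ℂ)
    rw [← castSign, ← Int.cast_mul, c0_par b]⟩
  have hv1B : v1 ∈ B := ⟨hv1, (mem_kerP_add v1).mpr fun b => by
    show sgn (par b) * ((c1 b : ℤ) : ℂ) + ((c1 b : ℤ) : ℂ) = 0
    rw [← castSign, ← Int.cast_mul, c1_par b]
    push_cast
    ring⟩
  have v0ne : v0 ≠ 0 := by
    intro h
    have h3 := congrFun h bz
    rw [v0z] at h3
    simp at h3
  have v1ne : v1 ≠ 0 := by
    intro h
    have h3 := congrFun h bo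
    rw [v1o] at h3
    simp at h3
  have hApos : 0 < Module.finrank ℂ A :=
    Module.finrank_pos_iff.mpr (nontrivial_of_ne ⟨v0, hv0A⟩ 0
      (fun h => v0ne (by simpa [Subtype.ext_iff] using h)))
  have hBpos : 0 < Module.finrank ℂ B :=
    Module.finrank_pos_iff.mpr (nontrivial_of_ne ⟨v1, hv1B⟩ 0
      (fun h => v1ne (by simpa [Subtype.ext_iff] using h)))
  have hAB : A ⊓ B = ⊥ := by
    rw [eq_bot_iff]
    rintro ψ ⟨hA', hB'⟩
    have hs := (mem_kerP_sub ψ).mp hA'.2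
    have ha := (mem_kerP_add ψ).mp hB'.2
    have hz : ψ = 0 := by
      funext b
      have h2 := ha b
      rw [hs b] at h2
      exact add_self_eq_zero.mp h2
    simp [hz]
  have hsum := Submodule.finrank_sup_add_finrank_inf_eq A B
  rw [hAB, finrank_bot, add_zero] at hsum
  have hle : A ⊔ B ≤ codeSpace5 := sup_le inf_le_left inf_le_left
  have hle2 := Submodule.finrank_mono hle
  rw [dimC] at hle2
  constructor <;> omega

end
end

section
/- Majorana weight of the logical operators of the five-qubit code exceeds two: with |0̄⟩ and |1̄⟩ the logical code states of the five-qubit code, one has ⟨0̄, γ_j 1̄⟩ = 0 for every 1 ≤ j ≤ 10 and ⟨0̄, γ_j γ_k 1̄⟩ = 0 for all 1 ≤ j,k ≤ 10; moreover there exist indices j < k < l in {1,…,10} with ⟨0̄, γ_j γ_k γ_l 1̄⟩ ≠ 0, so at least three Majorana operators are needed to map one logical state to the other. -/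
open Complex Matrix

noncomputable section

/-! Write every operator as a signed Pauli string `Z^z X^x`; two Pauli strings commute up to the
sign `(-1)^{z' ⬝ x + z ⬝ x'}`. Each `γ_j` anticommutes with the parity `P`, so each `γ_j γ_k`
commutes with `P` and cannot connect the two parity sectors. Each `γ_j` anticommutes with some
stabilizer `S_k`, which fixes both logical states, so `⟨0̄, γ_j 1̄⟩ = -⟨0̄, γ_j 1̄⟩`. Finally
`γ_1 γ_3 γ_5` commutes with every `S_k` and anticommutes with `P`, so it maps `|1̄⟩` to a nonzero
code vector of even parity; these form a line, since the stabilizers determine every coordinate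
of such a vector from its `|00000⟩` coordinate. -/

namespace Qubits

lemma mul_mul_eq_smul_mul {R : Type*} [Ring R] [Algebra ℂ R] {A B C : R} {s t : ℂ}
    (hB : A * B = s • (B * A)) (hC : A * C = t • (C * A)) :
    A * (B * C) = (s * t) • (B * C * A) := by
  rw [← mul_assoc, hB, smul_mul_assoc, mul_assoc, hC, mul_smul_comm, smul_smul, ← mul_assoc]

section Pauli

variable {L : ℕ}

@[simp] lemma bitSign_zero : bitSign 0 = 1 := rfl

lemma bitSign_add (u v : Fin 2) : bitSign (u + v) = bitSign u * bitSign v := by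
  fin_cases u <;> fin_cases v <;> simp [bitSign]

lemma bitSign_mul_self (u : Fin 2) : bitSign u * bitSign u = 1 := by
  fin_cases u <;> simp [bitSign]

lemma star_bitSign (u : Fin 2) : star (bitSign u) = bitSign u := by
  fin_cases u <;> simp [bitSign]

lemma bitString_add_self (b : QBasis L) : b + b = 0 :=
  funext fun i => (by decide : ∀ u : Fin 2, u + u = 0) (b i)

/-- The bit string with a single `1` at the 0-based site `k` (zero when `k ≥ L`). -/
def siteVec (L k : ℕ) : QBasis L := fun i => if (i : ℕ) = k then 1 else 0

def zString (L n : ℕ) : QBasis L := fun i => if (i : ℕ) < n then 1 else 0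

lemma siteVec_of_le {k : ℕ} (hk : L ≤ k) : siteVec L k = 0 :=
  funext fun i => if_neg (by omega)

lemma dotProduct_siteVec (v : QBasis L) {k : ℕ} (hk : k < L) :
    v ⬝ᵥ siteVec L k = v ⟨k, hk⟩ := by
  rw [dotProduct, Finset.sum_eq_single ⟨k, hk⟩]
  · simp [siteVec]
  · intro i _ hi
    have : (i : ℕ) ≠ k := fun h => hi (Fin.ext h)
    simp [siteVec, this]
  · simp

lemma siteVec_dotProduct_siteVec (b : ℕ) {a : ℕ} (ha : a < L) :
    siteVec L b ⬝ᵥ siteVec L a = if a = b then 1 else 0 :=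
  dotProduct_siteVec _ ha

lemma zString_succ (n : ℕ) : zString L (n + 1) = zString L n + siteVec L n := by
  funext i
  simp only [zString, siteVec, Pi.add_apply]
  rcases lt_trichotomy (i : ℕ) n with h | h | h
  · simp [h, h.ne, Nat.lt_succ_of_lt h]
  · simp [h]
  · simp [show ¬ (i : ℕ) < n + 1 by omega, show ¬ (i : ℕ) < n by omega, h.ne']

lemma flipBit_eq_add (k : Fin L) (b : QBasis L) : flipBit k b = b + siteVec L k := by
  funext i
  by_cases h : i = k
  · subst h
    simp only [flipBit, Function.update_self, Pi.add_apply, siteVec]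
    exact (by decide : ∀ u : Fin 2, 1 - u = u + 1) (b i)
  · have : (i : ℕ) ≠ k := fun h' => h (Fin.ext h')
    simp [flipBit, Function.update_of_ne h, siteVec, this]

/-- The Pauli string `Z^z X^x`: it maps `|b + x⟩` to `(-1)^{z ⬝ b} |b⟩`. -/
def pauli (x z : QBasis L) : QOp L :=
  Matrix.of fun b c => if c = b + x then bitSign (z ⬝ᵥ b) else 0

lemma pauli_mulVec_apply (x z : QBasis L) (ψ : QVec L) (b : QBasis L) :
    (pauli x z *ᵥ ψ) b = bitSign (z ⬝ᵥ b) * ψ (b + x) := by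
  simp [pauli, mulVec, dotProduct, ite_mul]

lemma pauli_zero_zero : pauli (0 : QBasis L) 0 = 1 := by
  ext b c
  simp [pauli, one_apply, eq_comm]

lemma pauli_mul (x z x' z' : QBasis L) :
    pauli x z * pauli x' z' = bitSign (z' ⬝ᵥ x) • pauli (x + x') (z + z') := by
  ext b c
  rw [mul_apply, Finset.sum_eq_single (b + x)]
  · simp only [pauli, of_apply, Matrix.smul_apply, smul_eq_mul, ↓reduceIte, ← add_assoc]
    split_ifs
    · rw [dotProduct_add, add_dotProduct, bitSign_add, bitSign_add, dotProduct_comm z' b]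
      ring
    · simp
  · intro d _ hd
    simp [pauli, hd]
  · simp

lemma pauli_mul_comm (x z x' z' : QBasis L) :
    pauli x z * pauli x' z' = bitSign (z' ⬝ᵥ x + z ⬝ᵥ x') • (pauli x' z' * pauli x z) := by
  rw [pauli_mul, pauli_mul, smul_smul, bitSign_add, mul_assoc, bitSign_mul_self, mul_one,
    add_comm x, add_comm z]

lemma conjTranspose_pauli (x z : QBasis L) :
    (pauli x z)ᴴ = bitSign (z ⬝ᵥ x) • pauli x z := by
  ext b c
  have hbc : (b = c + x) ↔ (c = b + x) := by
    constructor <;> rintro rfl <;> rw [add_assoc, bitString_add_self, add_zero]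
  simp only [conjTranspose_apply, pauli, of_apply, Matrix.smul_apply, smul_eq_mul, hbc]
  split_ifs with h
  · rw [star_bitSign, h, dotProduct_add, bitSign_add]
    ring
  · simp

end Pauli

section JordanWigner

variable {L : ℕ}

lemma siteX_eq (k : ℕ) : siteX L (k + 1) = pauli (siteVec L k) 0 := by
  unfold siteX
  split_ifs with h
  · ext b c
    simp [pauli, flipBit_eq_add]
  · rw [siteVec_of_le (by omega), pauli_zero_zero]

lemma siteY_eq {k : ℕ} (hk : k < L) :
    siteY L (k + 1) = (-I) • pauli (siteVec L k) (siteVec L k) := by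
  rw [siteY, dif_pos (by omega)]
  ext b c
  simp [pauli, flipBit_eq_add, dotProduct_comm _ b, dotProduct_siteVec b hk]

lemma siteZ_eq (k : ℕ) : siteZ L (k + 1) = pauli 0 (siteVec L k) := by
  unfold siteZ
  split_ifs with h
  · ext b c
    simp [pauli, diagonal_apply, eq_comm, dotProduct_comm _ b,
      dotProduct_siteVec b (by omega : k < L)]
  · rw [siteVec_of_le (by omega), pauli_zero_zero]

lemma opProd_siteZ (n : ℕ) : opProd L (siteZ L) n = pauli 0 (zString L n) := by
  induction n with
  | zero =>
    rw [opProd, show zString L 0 = 0 from funext fun _ => if_neg (Nat.not_lt_zero _)]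
    simp [pauli_zero_zero]
  | succ n ih =>
    rw [opProd, List.range_succ, List.map_append, List.prod_append, ← opProd, ih]
    simp [siteZ_eq, pauli_mul, zString_succ]

lemma totalParity_eq : totalParity L = pauli 0 1 := by
  rw [totalParity, opProd_siteZ]
  congr
  funext i
  exact if_pos i.isLt

lemma totalParity_conjTranspose : (totalParity L)ᴴ = totalParity L := by
  rw [totalParity_eq, conjTranspose_pauli, dotProduct_zero, bitSign_zero, one_smul]

def majPhase (m : ℕ) : ℂ := if m % 2 = 1 then 1 else -I

def majX (L m : ℕ) : QBasis L := siteVec L ((m - 1) / 2)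

def majZ (L m : ℕ) : QBasis L := zString L (m / 2)

lemma majorana_eq {m : ℕ} (hm : 1 ≤ m) (hmL : m ≤ 2 * L) :
    majorana L m = majPhase m • pauli (majX L m) (majZ L m) := by
  obtain ⟨k, rfl | rfl⟩ : ∃ k, m = 2 * k + 1 ∨ m = 2 * k + 2 := ⟨(m - 1) / 2, by omega⟩
  all_goals
    have h1 : (2 * k + 1) / 2 = k := by omega
    have h2 : (2 * k + 2) / 2 = k + 1 := by omega
    have h3 : (2 * k + 3) / 2 = k + 1 := by omega
  · simp [majorana, majPhase, majX, majZ, h1, h2, opProd_siteZ, siteX_eq, pauli_mul]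
  · simp [majorana, majPhase, majX, majZ, h1, h2, h3, opProd_siteZ, siteY_eq (by omega : k < L),
      pauli_mul, zString_succ]

lemma majZ_dotProduct_majX {m : ℕ} (hm : 1 ≤ m) (hmL : m ≤ 2 * L) :
    majZ L m ⬝ᵥ majX L m = if m % 2 = 1 then 0 else 1 := by
  rw [majX, dotProduct_siteVec _ (by omega)]
  simp only [majZ, zString]
  split_ifs <;> first | rfl | omega

lemma majorana_mul_self {m : ℕ} (hm : 1 ≤ m) (hmL : m ≤ 2 * L) :
    majorana L m * majorana L m = 1 := by
  rw [majorana_eq hm hmL, smul_mul_smul_comm, pauli_mul, bitString_add_self, bitString_add_self,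
    pauli_zero_zero, majZ_dotProduct_majX hm hmL, smul_smul, majPhase]
  split_ifs <;> simp [bitSign]

lemma majorana_mulVec_ne_zero {m : ℕ} (hm : 1 ≤ m) (hmL : m ≤ 2 * L) {ψ : QVec L}
    (hψ : ψ ≠ 0) : majorana L m *ᵥ ψ ≠ 0 := by
  intro h
  apply hψ
  rw [← one_mulVec ψ, ← majorana_mul_self hm hmL, ← mulVec_mulVec, h, mulVec_zero]

lemma totalParity_mul_majorana {m : ℕ} (hm : 1 ≤ m) (hmL : m ≤ 2 * L) :
    totalParity L * majorana L m = -(majorana L m * totalParity L) := by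
  have h1 : (1 : QBasis L) ⬝ᵥ majX L m = 1 := by
    rw [majX, dotProduct_siteVec _ (by omega)]
    rfl
  rw [totalParity_eq, majorana_eq hm hmL, mul_smul_comm, pauli_mul_comm, smul_mul_assoc,
    smul_comm, dotProduct_zero, zero_add, h1]
  simp [bitSign]

lemma totalParity_mul_majorana_mul_majorana {j k : ℕ} (hj : 1 ≤ j) (hjL : j ≤ 2 * L)
    (hk : 1 ≤ k) (hkL : k ≤ 2 * L) :
    totalParity L * (majorana L j * majorana L k) =
      majorana L j * majorana L k * totalParity L := by
  rw [← mul_assoc, totalParity_mul_majorana hj hjL, neg_mul, mul_assoc,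
    totalParity_mul_majorana hk hkL, mul_neg, neg_neg, mul_assoc]

end JordanWigner

section InnerProduct

variable {L : ℕ}

lemma qInner_eq_star_dotProduct (φ ψ : QVec L) : qInner φ ψ = star φ ⬝ᵥ ψ := rfl

lemma qInner_mulVec (A : QOp L) (φ ψ : QVec L) :
    qInner φ (A *ᵥ ψ) = qInner (Aᴴ *ᵥ φ) ψ := by
  simp only [qInner_eq_star_dotProduct, dotProduct_mulVec, star_mulVec,
    conjTranspose_conjTranspose]

lemma qInner_smul_right (φ ψ : QVec L) (c : ℂ) : qInner φ (c • ψ) = c * qInner φ ψ := by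
  simp only [qInner_eq_star_dotProduct, dotProduct_smul, smul_eq_mul]

open scoped ComplexOrder in
lemma qInner_self_eq_zero {φ : QVec L} : qInner φ φ = 0 ↔ φ = 0 :=
  dotProduct_star_self_eq_zero

lemma qInner_eq_zero_of_mulVec_eq_neg {A : QOp L} (hA : Aᴴ = A) {φ χ : QVec L}
    (hφ : A *ᵥ φ = φ) (hχ : A *ᵥ χ = -χ) : qInner φ χ = 0 := by
  have h : qInner φ χ = -qInner φ χ :=
    calc qInner φ χ = qInner (Aᴴ *ᵥ φ) χ := by rw [hA, hφ]
      _ = qInner φ (A *ᵥ χ) := (qInner_mulVec A φ χ).symm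
      _ = -qInner φ χ := by rw [hχ, ← neg_one_smul ℂ χ, qInner_smul_right, neg_one_mul]
  linear_combination h / 2

lemma qInner_majorana_mul_majorana_mulVec_eq_zero {φ ψ : QVec L}
    (hφ : totalParity L *ᵥ φ = φ) (hψ : totalParity L *ᵥ ψ = -ψ) {j k : ℕ} (hj : 1 ≤ j)
    (hjL : j ≤ 2 * L) (hk : 1 ≤ k) (hkL : k ≤ 2 * L) :
    qInner φ ((majorana L j * majorana L k) *ᵥ ψ) = 0 := by
  refine qInner_eq_zero_of_mulVec_eq_neg totalParity_conjTranspose hφ ?_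
  rw [mulVec_mulVec, totalParity_mul_majorana_mul_majorana hj hjL hk hkL, ← mulVec_mulVec, hψ,
    mulVec_neg]

end InnerProduct

section FiveQubitCode

def stabX (k : ℕ) : QBasis 5 := siteVec 5 ((k - 1) % 5) + siteVec 5 ((k + 2) % 5)

def stabZ (k : ℕ) : QBasis 5 := siteVec 5 (k % 5) + siteVec 5 ((k + 1) % 5)

lemma stab5_eq {k : ℕ} (hk : 1 ≤ k) : stab5 k = pauli (stabX k) (stabZ k) := by
  have h1 : (k - 1) % 5 ≠ k % 5 := by omega
  have h2 : (k - 1) % 5 ≠ (k + 1) % 5 := by omega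
  have h5 : (k - 1) % 5 < 5 := Nat.mod_lt _ (by norm_num)
  simp [stab5, idx5, siteX_eq, siteZ_eq, pauli_mul, fun b => siteVec_dotProduct_siteVec b h5,
    h1, h2, stabX, stabZ]

lemma stab5_conjTranspose {k : ℕ} (hk : k ∈ Finset.Icc 1 4) : (stab5 k)ᴴ = stab5 k := by
  have hsign : ∀ k ∈ Finset.Icc 1 4, stabZ k ⬝ᵥ stabX k = 0 := by decide
  rw [stab5_eq (Finset.mem_Icc.mp hk).1, conjTranspose_pauli, hsign k hk, bitSign_zero, one_smul]

def stabMajoranaSign (k j : ℕ) : Fin 2 := majZ 5 j ⬝ᵥ stabX k + stabZ k ⬝ᵥ majX 5 j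

lemma stab5_mul_majorana {k j : ℕ} (hk : 1 ≤ k) (hj : 1 ≤ j) (hj' : j ≤ 10) :
    stab5 k * majorana 5 j = bitSign (stabMajoranaSign k j) • (majorana 5 j * stab5 k) := by
  rw [stab5_eq hk, majorana_eq hj hj', mul_smul_comm, pauli_mul_comm, smul_mul_assoc, smul_comm]
  rfl

lemma exists_stabMajoranaSign_eq_one :
    ∀ j ∈ Finset.Icc 1 10, ∃ k ∈ Finset.Icc 1 4, stabMajoranaSign k j = 1 := by
  decide

lemma stabMajoranaSign_one_three_five : ∀ k ∈ Finset.Icc 1 4,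
    stabMajoranaSign k 1 + stabMajoranaSign k 3 + stabMajoranaSign k 5 = 0 := by
  decide

lemma qInner_majorana_mulVec_eq_zero {φ ψ : QVec 5}
    (hφ : ∀ k ∈ Finset.Icc 1 4, stab5 k *ᵥ φ = φ) (hψ : ∀ k ∈ Finset.Icc 1 4, stab5 k *ᵥ ψ = ψ)
    {j : ℕ} (hj : 1 ≤ j) (hj' : j ≤ 10) : qInner φ (majorana 5 j *ᵥ ψ) = 0 := by
  obtain ⟨k, hk, hsign⟩ := exists_stabMajoranaSign_eq_one j (Finset.mem_Icc.mpr ⟨hj, hj'⟩)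
  refine qInner_eq_zero_of_mulVec_eq_neg (stab5_conjTranspose hk) (hφ k hk) ?_
  rw [mulVec_mulVec, stab5_mul_majorana (Finset.mem_Icc.mp hk).1 hj hj', hsign, smul_mulVec,
    ← mulVec_mulVec, hψ k hk]
  simp [bitSign]

lemma stab5_mul_majorana_one_three_five {k : ℕ} (hk : k ∈ Finset.Icc 1 4) :
    stab5 k * (majorana 5 1 * majorana 5 3 * majorana 5 5) =
      majorana 5 1 * majorana 5 3 * majorana 5 5 * stab5 k := by
  have hk1 := (Finset.mem_Icc.mp hk).1
  rw [mul_mul_eq_smul_mul (mul_mul_eq_smul_mul (stab5_mul_majorana hk1 le_rfl (by norm_num))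
    (stab5_mul_majorana hk1 (by norm_num) (by norm_num)))
    (stab5_mul_majorana hk1 (by norm_num) (by norm_num)), ← bitSign_add, ← bitSign_add,
    stabMajoranaSign_one_three_five k hk, bitSign_zero, one_smul]

def IsEvenCodeVector (φ : QVec 5) : Prop :=
  (∀ k ∈ Finset.Icc 1 4, stab5 k *ᵥ φ = φ) ∧ totalParity 5 *ᵥ φ = φ

lemma isEvenCodeVector_mulVec {E : QOp 5} (hSE : ∀ k ∈ Finset.Icc 1 4, stab5 k * E = E * stab5 k)
    (hPE : totalParity 5 * E = -(E * totalParity 5)) {ψ : QVec 5}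
    (hψ : ∀ k ∈ Finset.Icc 1 4, stab5 k *ᵥ ψ = ψ) (hψP : totalParity 5 *ᵥ ψ = -ψ) :
    IsEvenCodeVector (E *ᵥ ψ) := by
  refine ⟨fun k hk => ?_, ?_⟩
  · rw [mulVec_mulVec, hSE k hk, ← mulVec_mulVec, hψ k hk]
  · rw [mulVec_mulVec, hPE, neg_mulVec, ← mulVec_mulVec, hψP, mulVec_neg, neg_neg]

lemma exists_smul_pauli_mulVec_eq_self (l : List ℕ) (hl : ∀ k ∈ l, k ∈ Finset.Icc 1 4) :
    ∃ (c : ℂ) (z : QBasis 5), ∀ φ : QVec 5, (∀ k ∈ Finset.Icc 1 4, stab5 k *ᵥ φ = φ) →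
      (c • pauli (l.map stabX).sum z) *ᵥ φ = φ := by
  induction l with
  | nil => exact ⟨1, 0, fun φ _ => by simp [pauli_zero_zero]⟩
  | cons k l ih =>
    obtain ⟨c, z, hcz⟩ := ih fun k' hk' => hl k' (List.mem_cons_of_mem k hk')
    have hk := hl k List.mem_cons_self
    refine ⟨c * bitSign (z ⬝ᵥ stabX k), stabZ k + z, fun φ hφ => ?_⟩
    calc ((c * bitSign (z ⬝ᵥ stabX k)) • pauli ((k :: l).map stabX).sum (stabZ k + z)) *ᵥ φ
        = (stab5 k * (c • pauli (l.map stabX).sum z)) *ᵥ φ := by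
          rw [stab5_eq (Finset.mem_Icc.mp hk).1, mul_smul_comm, pauli_mul, smul_smul,
            List.map_cons, List.sum_cons]
      _ = φ := by rw [← mulVec_mulVec, hcz φ hφ, hφ k hk]

/-- Odd `b` are killed by the parity; even `b` are the X-parts of products of stabilizers. -/
lemma exists_apply_eq_mul_apply_zero (b : QBasis 5) :
    ∃ c : ℂ, ∀ φ, IsEvenCodeVector φ → φ b = c * φ 0 := by
  by_cases hb : (1 : QBasis 5) ⬝ᵥ b = 0
  · have hspan : ∀ b : QBasis 5, 1 ⬝ᵥ b = 0 → ∃ l ∈ [1, 2, 3, 4].sublists,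
        (∀ k ∈ l, k ∈ Finset.Icc 1 4) ∧ (l.map stabX).sum = b := by decide
    obtain ⟨l, -, hl, rfl⟩ := hspan b hb
    obtain ⟨c, z, hcz⟩ := exists_smul_pauli_mulVec_eq_self l hl
    refine ⟨c * bitSign (z ⬝ᵥ (l.map stabX).sum), fun φ hφ => ?_⟩
    have h := congrFun (hcz φ hφ.1) (l.map stabX).sum
    rw [smul_mulVec, Pi.smul_apply, pauli_mulVec_apply, bitString_add_self, smul_eq_mul] at h
    rw [← h, mul_assoc]
  · have hb1 : (1 : QBasis 5) ⬝ᵥ b = 1 := (by decide : ∀ u : Fin 2, u ≠ 0 → u = 1) _ hb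
    refine ⟨0, fun φ hφ => ?_⟩
    have h := congrFun hφ.2 b
    rw [totalParity_eq, pauli_mulVec_apply, add_zero, hb1, bitSign, if_neg one_ne_zero] at h
    linear_combination -h / 2

lemma IsEvenCodeVector.eq_zero_of_apply_zero {φ : QVec 5} (hφ : IsEvenCodeVector φ)
    (h0 : φ 0 = 0) : φ = 0 :=
  funext fun b => by
    obtain ⟨c, hc⟩ := exists_apply_eq_mul_apply_zero b
    rw [hc φ hφ, h0, mul_zero, Pi.zero_apply]

lemma IsEvenCodeVector.qInner_ne_zero {φ ψ : QVec 5} (hφ : IsEvenCodeVector φ)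
    (hψ : IsEvenCodeVector ψ) (hφ0 : φ ≠ 0) (hψ0 : ψ ≠ 0) : qInner φ ψ ≠ 0 := by
  have hprop : φ 0 • ψ = ψ 0 • φ := funext fun b => by
    obtain ⟨c, hc⟩ := exists_apply_eq_mul_apply_zero b
    simp only [Pi.smul_apply, smul_eq_mul, hc φ hφ, hc ψ hψ]
    ring
  have h := congrArg (qInner φ) hprop
  rw [qInner_smul_right, qInner_smul_right] at h
  intro h0
  rw [h0, mul_zero, eq_comm, mul_eq_zero, qInner_self_eq_zero] at h
  exact h.elim (fun h' => hψ0 (hψ.eq_zero_of_apply_zero h')) hφ0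

end FiveQubitCode

end Qubits

open Qubits in
/-- the Majorana weight between the logical code states of the
five-qubit code exceeds two: `⟨0̄, γ_j 1̄⟩ = 0` and `⟨0̄, γ_j γ_k 1̄⟩ = 0` for all
Majorana indices, while some triple product `γ_j γ_k γ_l` has nonzero matrix
element between the two logical states. -/
theorem five_qubit_logical_majorana_weight (ψ0 ψ1 : QVec 5)
    (h0C : ∀ k ∈ Finset.Icc 1 4, stab5 k *ᵥ ψ0 = ψ0)
    (h1C : ∀ k ∈ Finset.Icc 1 4, stab5 k *ᵥ ψ1 = ψ1)
    (h0n : qInner ψ0 ψ0 = 1) (h1n : qInner ψ1 ψ1 = 1)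
    (h0P : totalParity 5 *ᵥ ψ0 = ψ0)
    (h1P : totalParity 5 *ᵥ ψ1 = -ψ1) :
    (∀ j : ℕ, 1 ≤ j → j ≤ 10 → qInner ψ0 (majorana 5 j *ᵥ ψ1) = 0) ∧
    (∀ j k : ℕ, 1 ≤ j → j ≤ 10 → 1 ≤ k → k ≤ 10 →
      qInner ψ0 ((majorana 5 j * majorana 5 k) *ᵥ ψ1) = 0) ∧
    (∃ j k l : ℕ, 1 ≤ j ∧ j < k ∧ k < l ∧ l ≤ 10 ∧
      qInner ψ0 ((majorana 5 j * majorana 5 k * majorana 5 l) *ᵥ ψ1) ≠ 0) := by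
  have hψ0 : ψ0 ≠ 0 := by rintro rfl; simp [qInner] at h0n
  have hψ1 : ψ1 ≠ 0 := by rintro rfl; simp [qInner] at h1n
  refine ⟨fun j hj hj' => qInner_majorana_mulVec_eq_zero h0C h1C hj hj',
    fun j k hj hj' hk hk' => qInner_majorana_mul_majorana_mulVec_eq_zero h0P h1P hj hj' hk hk',
    1, 3, 5, le_rfl, by norm_num, by norm_num, by norm_num, ?_⟩
  have hPE : totalParity 5 * (majorana 5 1 * majorana 5 3 * majorana 5 5) =
      -(majorana 5 1 * majorana 5 3 * majorana 5 5 * totalParity 5) := by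
    rw [← mul_assoc, totalParity_mul_majorana_mul_majorana le_rfl (by norm_num) (by norm_num)
      (by norm_num), mul_assoc, totalParity_mul_majorana (by norm_num) (by norm_num), mul_neg]
    simp only [mul_assoc]
  refine IsEvenCodeVector.qInner_ne_zero ⟨h0C, h0P⟩
    (isEvenCodeVector_mulVec (fun k hk => stab5_mul_majorana_one_three_five hk) hPE h1C h1P)
    hψ0 ?_
  rw [← mulVec_mulVec, ← mulVec_mulVec]
  exact majorana_mulVec_ne_zero le_rfl (by norm_num) (majorana_mulVec_ne_zero (by norm_num)
    (by norm_num) (majorana_mulVec_ne_zero (by norm_num) (by norm_num) hψ1))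

end
end
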